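/- arXiv:math/0111103 — 4 statements merged into one kernel-verified Lean document; each statement's English description precedes it below -/
import Mathlib

section
/- Let 0 < a < 1 and M(a) = π²·tan²(πa/2). The first eigenvalue of the operator −d²/dx² on [0,a] with boundary conditions f'(0) = 0 and f'(a) = −(√(M(a))/2)·f(a) equals π²/4; equivalently, the infimum over nonzero C¹ functions f on [0,a] with f'(0)=0 of the Rayleigh quotient [∫₀^a f'² dx + (√(M(a))/2)·f(a)²] / ∫₀^a f² dx equals π²/4, attained at f(x) = cos(πx/2). -/
/-!
Ground-state substitution. The weight `w x = (π/2) tan (π x / 2) = -φ'/φ` of the ground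
state `φ x = cos (π x / 2)` solves the Riccati equation `w' = w² + π²/4`, vanishes at `0`,
and `w a = √M(a)/2`. Hence `f'² + (w f²)' = π²/4 · f² + (f' + w f)²`, and integrating over
`[0, a]` writes the numerator of the Rayleigh quotient as `π²/4 ∫ f² + ∫ (f' + w f)²`; the
last integral is nonnegative and vanishes for `f = φ`, since `φ' + w φ = 0`.
-/

open MeasureTheory Real Set intervalIntegral

theorem integral_deriv_sq_add_boundary_eq_of_riccati {f f' w : ℝ → ℝ} {a b c : ℝ}
    (hab : a ≤ b)
    (hf : ∀ x ∈ Icc a b, HasDerivWithinAt f (f' x) (Icc a b) x)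
    (hf' : ContinuousOn f' (Icc a b))
    (hw : ∀ x ∈ Icc a b, HasDerivWithinAt w (w x ^ 2 + c) (Icc a b) x) :
    (∫ x in a..b, f' x ^ 2) + w b * f b ^ 2 - w a * f a ^ 2
      = c * (∫ x in a..b, f x ^ 2) + ∫ x in a..b, (f' x + w x * f x) ^ 2 := by
  have hfc : ContinuousOn f (Icc a b) := fun x hx => (hf x hx).continuousWithinAt
  have hwc : ContinuousOn w (Icc a b) := fun x hx => (hw x hx).continuousWithinAt
  have hint : ∀ {g : ℝ → ℝ}, ContinuousOn g (Icc a b) → IntervalIntegrable g volume a b :=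
    fun hg => (uIcc_of_le hab ▸ hg).intervalIntegrable
  set F' : ℝ → ℝ := fun x => (w x ^ 2 + c) * f x ^ 2 + w x * (2 * f x ^ 1 * f' x)
  have hF : ∀ x ∈ Icc a b, HasDerivWithinAt (fun x => w x * f x ^ 2) (F' x) (Icc a b) x :=
    fun x hx => (hw x hx).mul ((hf x hx).pow 2)
  have hF'c : ContinuousOn F' (Icc a b) := by fun_prop
  have hFTC : ∫ x in a..b, F' x = w b * f b ^ 2 - w a * f a ^ 2 :=
    integral_eq_sub_of_hasDeriv_right_of_le hab (fun x hx => (hF x hx).continuousWithinAt)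
      (fun x hx => ((hF x (Ioo_subset_Icc_self hx)).hasDerivAt
        (Icc_mem_nhds hx.1 hx.2)).hasDerivWithinAt) (hint hF'c)
  have hpointwise : ∀ x, f' x ^ 2 + F' x = c * f x ^ 2 + (f' x + w x * f x) ^ 2 := by
    intro x
    simp only [F']
    ring
  calc (∫ x in a..b, f' x ^ 2) + w b * f b ^ 2 - w a * f a ^ 2
      = ∫ x in a..b, (f' x ^ 2 + F' x) := by
        rw [integral_add (hint (by fun_prop)) (hint hF'c), hFTC]; ring
    _ = ∫ x in a..b, (c * f x ^ 2 + (f' x + w x * f x) ^ 2) := by simp only [hpointwise]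
    _ = c * (∫ x in a..b, f x ^ 2) + ∫ x in a..b, (f' x + w x * f x) ^ 2 := by
        rw [integral_add (hint (by fun_prop)) (hint (by fun_prop)),
          intervalIntegral.integral_const_mul]

theorem hasDerivAt_mul_tan_mul {k x : ℝ} (hx : cos (k * x) ≠ 0) :
    HasDerivAt (fun y => k * tan (k * y)) ((k * tan (k * x)) ^ 2 + k ^ 2) x := by
  have h := ((hasDerivAt_tan hx).comp x ((hasDerivAt_id x).const_mul k)).const_mul k
  refine h.congr_deriv ?_
  rw [← inv_one_add_tan_sq hx]
  simp only [mul_one, one_div, inv_inv]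
  ring

theorem hasDerivAt_cos_mul_eq_neg_mul_tan {k x : ℝ} (hx : cos (k * x) ≠ 0) :
    HasDerivAt (fun y => cos (k * y)) (-(k * tan (k * x)) * cos (k * x)) x := by
  have h := (hasDerivAt_cos (k * x)).comp x ((hasDerivAt_id x).const_mul k)
  refine h.congr_deriv ?_
  rw [tan_eq_sin_div_cos]
  field_simp

theorem cos_half_pi_mul_pos {a x : ℝ} (ha1 : a < 1) (hx : x ∈ Icc 0 a) :
    0 < cos (π / 2 * x) := by
  apply cos_pos_of_mem_Ioo
  constructor <;> nlinarith [pi_pos, hx.1, hx.2]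

theorem sqrt_pi_sq_mul_tan_sq_div_two {a : ℝ} (ha : 0 < a) (ha1 : a < 1) :
    √(π ^ 2 * tan (π * a / 2) ^ 2) / 2 = π / 2 * tan (π / 2 * a) := by
  have htan : 0 ≤ tan (π / 2 * a) := by
    rw [tan_eq_sin_div_cos]
    exact div_nonneg (sin_nonneg_of_nonneg_of_le_pi (by positivity) (by nlinarith [pi_pos]))
      (cos_half_pi_mul_pos ha1 ⟨ha.le, le_rfl⟩).le
  rw [show π * a / 2 = π / 2 * a by ring, ← mul_pow, sqrt_sq (by positivity)]
  ring

theorem rayleigh_numerator_eq {a : ℝ} (ha : 0 < a) (ha1 : a < 1) {f : ℝ → ℝ}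
    (hf : ContDiffOn ℝ 1 f (Icc 0 a)) :
    (∫ x in (0:ℝ)..a, derivWithin f (Icc 0 a) x ^ 2)
        + √(π ^ 2 * tan (π * a / 2) ^ 2) / 2 * f a ^ 2
      = π ^ 2 / 4 * (∫ x in (0:ℝ)..a, f x ^ 2)
        + ∫ x in (0:ℝ)..a,
            (derivWithin f (Icc 0 a) x + π / 2 * tan (π / 2 * x) * f x) ^ 2 := by
  have hriccati := integral_deriv_sq_add_boundary_eq_of_riccati
    (w := fun x => π / 2 * tan (π / 2 * x)) (c := (π / 2) ^ 2) ha.le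
    (fun x hx => ((hf.differentiableOn one_ne_zero) x hx).hasDerivWithinAt)
    (hf.continuousOn_derivWithin (uniqueDiffOn_Icc ha) le_rfl)
    (fun x hx => (hasDerivAt_mul_tan_mul (cos_half_pi_mul_pos ha1 hx).ne').hasDerivWithinAt)
  rw [sqrt_pi_sq_mul_tan_sq_div_two ha ha1]
  simp only [mul_zero, tan_zero, zero_mul, sub_zero] at hriccati
  rw [hriccati]
  ring

theorem derivWithin_cos_half_pi_mul {a x : ℝ} (ha : 0 < a) (ha1 : a < 1) (hx : x ∈ Icc 0 a) :
    derivWithin (fun x => cos (π * x / 2)) (Icc 0 a) x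
      = -(π / 2 * tan (π / 2 * x)) * cos (π * x / 2) := by
  have h := hasDerivAt_cos_mul_eq_neg_mul_tan (cos_half_pi_mul_pos ha1 hx).ne'
  simp only [div_mul_eq_mul_div] at h ⊢
  exact h.hasDerivWithinAt.derivWithin (uniqueDiffOn_Icc ha x hx)

theorem integral_cos_half_pi_mul_sq_pos {a : ℝ} (ha : 0 < a) (ha1 : a < 1) :
    0 < ∫ x in (0:ℝ)..a, cos (π * x / 2) ^ 2 := by
  refine intervalIntegral_pos_of_pos_on (Continuous.intervalIntegrable (by fun_prop) 0 a)
    (fun x hx => pow_pos ?_ 2) ha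
  simpa only [div_mul_eq_mul_div] using cos_half_pi_mul_pos ha1 (Ioo_subset_Icc_self hx)

theorem rayleigh_quotient_cos_half_pi_mul {a : ℝ} (ha : 0 < a) (ha1 : a < 1) :
    ((∫ x in (0:ℝ)..a, derivWithin (fun x => cos (π * x / 2)) (Icc 0 a) x ^ 2)
        + √(π ^ 2 * tan (π * a / 2) ^ 2) / 2 * cos (π * a / 2) ^ 2)
      / (∫ x in (0:ℝ)..a, cos (π * x / 2) ^ 2) = π ^ 2 / 4 := by
  have hresidual : ∫ x in (0:ℝ)..a, (derivWithin (fun x => cos (π * x / 2)) (Icc 0 a) x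
      + π / 2 * tan (π / 2 * x) * cos (π * x / 2)) ^ 2 = 0 := by
    refine (integral_congr (g := fun _ => 0) fun x hx => ?_).trans integral_zero
    rw [uIcc_of_le ha.le] at hx
    simp only [derivWithin_cos_half_pi_mul ha ha1 hx]
    ring
  rw [rayleigh_numerator_eq ha ha1 (by fun_prop), hresidual, add_zero,
    mul_div_cancel_right₀ _ (integral_cos_half_pi_mul_sq_pos ha ha1).ne']

/-- The infimum of the Rayleigh quotient
`(∫₀^a f'² + (√M(a)/2) f(a)²) / ∫₀^a f²` over nonzero C¹ functions with
`f'(0) = 0` equals `π²/4`, attained at `f(x) = cos(πx/2)`. -/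
theorem stmt5 (a : ℝ) (ha : 0 < a) (ha1 : a < 1) :
    IsLeast
      {q : ℝ | ∃ f : ℝ → ℝ, ContDiffOn ℝ 1 f (Icc 0 a) ∧
        derivWithin f (Icc 0 a) 0 = 0 ∧ (∫ x in (0:ℝ)..a, f x ^ 2) ≠ 0 ∧
        q = ((∫ x in (0:ℝ)..a, derivWithin f (Icc 0 a) x ^ 2)
              + (Real.sqrt (π ^ 2 * Real.tan (π * a / 2) ^ 2) / 2) * f a ^ 2)
            / (∫ x in (0:ℝ)..a, f x ^ 2)}
      (π ^ 2 / 4)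
    ∧ ((∫ x in (0:ℝ)..a,
          derivWithin (fun x => Real.cos (π * x / 2)) (Icc 0 a) x ^ 2)
        + (Real.sqrt (π ^ 2 * Real.tan (π * a / 2) ^ 2) / 2)
            * Real.cos (π * a / 2) ^ 2)
        / (∫ x in (0:ℝ)..a, Real.cos (π * x / 2) ^ 2) = π ^ 2 / 4 := by
  have hφ_norm := integral_cos_half_pi_mul_sq_pos ha ha1
  have hφ_quotient := rayleigh_quotient_cos_half_pi_mul ha ha1
  refine ⟨⟨⟨fun x => cos (π * x / 2), by fun_prop, ?_, hφ_norm.ne', hφ_quotient.symm⟩,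
    ?_⟩, hφ_quotient⟩
  · simp [derivWithin_cos_half_pi_mul ha ha1 ⟨le_rfl, ha.le⟩]
  · rintro q ⟨f, hf, -, hne, rfl⟩
    have hpos : 0 < ∫ x in (0:ℝ)..a, f x ^ 2 :=
      (integral_nonneg ha.le fun _ _ => sq_nonneg _).lt_of_ne hne.symm
    rw [le_div_iff₀ hpos, rayleigh_numerator_eq ha ha1 hf]
    exact le_add_of_nonneg_right (integral_nonneg ha.le fun _ _ => sq_nonneg _)
end

section
/- Let M = π^{4/3} and g(x) = cos(μx) where μ² = π²/4 − π^{4/3}·δ^{2/3}. There exists a constant C₂ and δ₀ > 0 such that for all 0 < δ < δ₀: ∫₀¹ g'(x)² dx − (π²/4 − M·δ^{2/3} − C₂·δ^{4/3})·∫₀¹ g(x)² dx + (√M/(2δ^{2/3}))·g(1)² ≤ 0. -/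
/-!
Write `t = δ^(2/3)` and `ε = π/2 - μ`, so that `M t = ε (π - ε)`. Since `g'' = -μ² g`,
integration by parts gives `∫ g'² - μ² ∫ g² = g(1) g'(1) = -μ sin ε cos ε`. With `C₂ = -π⁵` and
`∫ g² ≥ 1/2`, it remains to bound the boundary term:
`√M / (2t) · sin² ε ≤ μ sin ε cos ε + π⁵ t² / 2`.
Because `M √M = π²`, both `√M / (2t) · sin² ε` and `μ sin ε cos ε` equal `M t / 2 + O(t²)`: the
leading terms cancel exactly, and the `O(t²)` remainder is absorbed by `π⁵ t² / 2`.
-/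

open MeasureTheory Real Set intervalIntegral

lemma hasDerivAt_sin_mul (μ x : ℝ) : HasDerivAt (fun x => sin (μ * x)) (μ * cos (μ * x)) x := by
  simpa [mul_comm] using ((hasDerivAt_id x).const_mul μ).sin

lemma hasDerivAt_cos_mul (μ x : ℝ) : HasDerivAt (fun x => cos (μ * x)) (-(μ * sin (μ * x))) x := by
  simpa [mul_comm] using ((hasDerivAt_id x).const_mul μ).cos

/-- `∫ g'² - μ² ∫ g² = [g g']ₐᵇ` for `g x = cos (μ x)`, since `g'' = -μ² g`. -/
lemma integral_deriv_cos_mul_sq_sub (μ a b : ℝ) :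
    (∫ x in a..b, deriv (fun x => cos (μ * x)) x ^ 2) - μ ^ 2 * ∫ x in a..b, cos (μ * x) ^ 2
      = μ * (sin (μ * a) * cos (μ * a) - sin (μ * b) * cos (μ * b)) := by
  simp only [(hasDerivAt_cos_mul μ _).deriv]
  have hF : ∀ x ∈ uIcc a b, HasDerivAt (fun x => -(μ * (sin (μ * x) * cos (μ * x))))
      ((-(μ * sin (μ * x))) ^ 2 - μ ^ 2 * cos (μ * x) ^ 2) x := by
    intro x _
    exact (((hasDerivAt_sin_mul μ x).mul (hasDerivAt_cos_mul μ x)).const_mul μ).neg.congr_deriv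
      (by ring)
  rw [← intervalIntegral.integral_const_mul, ← intervalIntegral.integral_sub,
    integral_eq_sub_of_hasDerivAt hF]
  · ring
  all_goals exact (by fun_prop : Continuous _).intervalIntegrable _ _

lemma half_le_integral_cos_mul_sq {μ : ℝ} (h0 : 0 < μ) (h1 : μ ≤ π / 2) :
    1 / 2 ≤ ∫ x in (0:ℝ)..1, cos (μ * x) ^ 2 := by
  rw [intervalIntegral.integral_comp_mul_left (fun x => cos x ^ 2) h0.ne', integral_cos_sq]
  have hπ := pi_pos
  have : 0 ≤ cos μ * sin μ := mul_nonneg (cos_nonneg_of_mem_Icc ⟨by linarith, h1⟩)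
    (sin_nonneg_of_nonneg_of_le_pi h0.le (by linarith))
  rw [smul_eq_mul, le_inv_mul_iff₀ h0]
  simp only [one_div, mul_one, mul_zero, cos_zero, sin_zero, sub_zero]
  linarith

lemma pi_sq_mul_sin_sq_le {ε : ℝ} (h0 : 0 < ε) (h1 : ε ≤ 1) :
    π ^ 2 * sin ε ^ 2
      ≤ ε * (π - ε) * ((π - 2 * ε) * (sin ε * cos ε) + π * ε ^ 2 * (π - ε) ^ 2) := by
  have hπ3 := pi_gt_three
  have hπ4 := pi_lt_four
  have hsin0 : 0 ≤ sin ε := sin_nonneg_of_nonneg_of_le_pi h0.le (by linarith)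
  have hsin : sin ε ≤ ε := sin_le h0.le
  have hε2 : 2 ≤ π - ε := by linarith
  have hprod0 : 0 ≤ (π - ε) * (π - 2 * ε) := by nlinarith
  have hprod : (π - ε) * (π - 2 * ε) * ε ^ 2 ≤ π ^ 2 * ε :=
    mul_le_mul (by nlinarith) (by nlinarith) (by positivity) (by positivity)
  have hD : π ^ 2 - (π - ε) * (π - 2 * ε) * (1 - ε ^ 2 / 2) =
      ε * (3 * π - 2 * ε) + (π - ε) * (π - 2 * ε) * ε ^ 2 / 2 := by ring
  have hD0 : 0 ≤ π ^ 2 - (π - ε) * (π - 2 * ε) * (1 - ε ^ 2 / 2) := by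
    rw [hD]; nlinarith [mul_nonneg hprod0 (sq_nonneg ε)]
  have hD1 : π ^ 2 - (π - ε) * (π - 2 * ε) * (1 - ε ^ 2 / 2) ≤ 8 * π * ε := by
    rw [hD]; nlinarith
  have hcube : 2 ^ 3 ≤ (π - ε) ^ 3 := pow_le_pow_left₀ (by norm_num) hε2 3
  have key : π ^ 2 * sin ε ≤ (π - ε) * (π - 2 * ε) * (sin ε * cos ε) + π * ε ^ 2 * (π - ε) ^ 3 :=
    calc π ^ 2 * sin ε = sin ε * (π ^ 2 - (π - ε) * (π - 2 * ε) * (1 - ε ^ 2 / 2))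
          + sin ε * ((π - ε) * (π - 2 * ε) * (1 - ε ^ 2 / 2)) := by ring
      _ ≤ ε * (8 * π * ε) + sin ε * ((π - ε) * (π - 2 * ε) * cos ε) := by
        gcongr
        exact one_sub_sq_div_two_le_cos
      _ ≤ _ := by nlinarith [mul_le_mul_of_nonneg_left hcube (by positivity : 0 ≤ π * ε ^ 2)]
  calc π ^ 2 * sin ε ^ 2 ≤ ε * (π ^ 2 * sin ε) := by
        nlinarith [mul_le_mul_of_nonneg_left hsin (by positivity : 0 ≤ π ^ 2 * sin ε)]
    _ ≤ ε * ((π - ε) * (π - 2 * ε) * (sin ε * cos ε) + π * ε ^ 2 * (π - ε) ^ 3) := by gcongr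
    _ = _ := by ring

lemma sqrt_div_mul_sin_sq_le {M t ε : ℝ} (hM : M * √M = π ^ 2) (hMle : M ≤ π ^ 2) (ht : 0 < t)
    (h0 : 0 < ε) (h1 : ε ≤ 1) (hMt : M * t = ε * (π - ε)) :
    √M / (2 * t) * sin ε ^ 2 ≤ (π / 2 - ε) * (sin ε * cos ε) + π ^ 5 * t ^ 2 / 2 := by
  have hε : 0 < ε * (π - ε) := mul_pos h0 (by linarith [pi_gt_three])
  have hM0 : 0 < M := pos_of_mul_pos_left (hMt ▸ hε) ht.le
  have hsqrt : √M / (2 * t) = π ^ 2 / (2 * (ε * (π - ε))) := by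
    rw [← hMt, ← hM]; field_simp
  have ht2 : π * (ε * (π - ε)) ^ 2 ≤ π ^ 5 * t ^ 2 := by
    rw [← hMt]
    have : M ^ 2 ≤ (π ^ 2) ^ 2 := pow_le_pow_left₀ hM0.le hMle 2
    nlinarith [mul_le_mul_of_nonneg_left this (by positivity : 0 ≤ π * t ^ 2)]
  rw [hsqrt, div_mul_eq_mul_div, div_le_iff₀ (by positivity)]
  linarith [pi_sq_mul_sin_sq_le h0 h1, mul_le_mul_of_nonneg_left ht2 hε.le]

lemma exists_sqrt_eq_pi_div_two_sub {s : ℝ} (hs0 : 0 < s) (hs1 : s ≤ π - 1) :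
    ∃ ε, 0 < ε ∧ ε ≤ 1 ∧ √(π ^ 2 / 4 - s) = π / 2 - ε ∧ s = ε * (π - ε) := by
  have hπ := pi_gt_three
  have hnonneg : 0 ≤ π ^ 2 / 4 - s := by nlinarith
  refine ⟨π / 2 - √(π ^ 2 / 4 - s), ?_, ?_, by ring, ?_⟩
  · rw [sub_pos, sqrt_lt' (by positivity)]
    nlinarith
  · rw [sub_le_comm]
    exact le_sqrt_of_sq_le (by nlinarith)
  · nlinarith [sq_sqrt hnonneg]

lemma rpow_four_thirds_mul_sqrt {x : ℝ} (hx : 0 ≤ x) :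
    x ^ ((4:ℝ) / 3) * √(x ^ ((4:ℝ) / 3)) = x ^ 2 := by
  rw [sqrt_eq_rpow, ← rpow_mul hx, ← rpow_add' hx (by norm_num)]
  norm_num

lemma rpow_four_thirds_eq_sq {x : ℝ} (hx : 0 ≤ x) : x ^ ((4:ℝ) / 3) = (x ^ ((2:ℝ) / 3)) ^ 2 := by
  rw [← rpow_natCast, ← rpow_mul hx]
  norm_num

theorem stmt9 :
    ∃ C₂ : ℝ, ∃ δ₀ > (0:ℝ), ∀ δ : ℝ, 0 < δ → δ < δ₀ →
      (∫ x in (0:ℝ)..1,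
          deriv (fun x => Real.cos
            (Real.sqrt (π ^ 2 / 4 - π ^ ((4:ℝ)/3) * δ ^ ((2:ℝ)/3)) * x)) x ^ 2)
        - (π ^ 2 / 4 - π ^ ((4:ℝ)/3) * δ ^ ((2:ℝ)/3) - C₂ * δ ^ ((4:ℝ)/3))
            * (∫ x in (0:ℝ)..1, Real.cos
                (Real.sqrt (π ^ 2 / 4 - π ^ ((4:ℝ)/3) * δ ^ ((2:ℝ)/3)) * x) ^ 2)
        + (Real.sqrt (π ^ ((4:ℝ)/3)) / (2 * δ ^ ((2:ℝ)/3)))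
            * Real.cos
                (Real.sqrt (π ^ 2 / 4 - π ^ ((4:ℝ)/3) * δ ^ ((2:ℝ)/3))) ^ 2
        ≤ 0 := by
  refine ⟨-π ^ 5, 1 / 27, by norm_num, fun δ hδ0 hδ₀ => ?_⟩
  have hπ := pi_gt_three
  rw [rpow_four_thirds_eq_sq hδ0.le]
  set M := π ^ ((4:ℝ) / 3)
  set t := δ ^ ((2:ℝ) / 3)
  have ht0 : 0 < t := by positivity
  have ht : t < 1 / 9 := by
    calc t < (1 / 27) ^ ((2:ℝ) / 3) := rpow_lt_rpow hδ0.le hδ₀ (by norm_num)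
      _ = 1 / 9 := by
        rw [show (1 / 27 : ℝ) = (1 / 3) ^ (3:ℝ) by norm_num, ← rpow_mul (by norm_num)]
        norm_num
  have hM : M * √M = π ^ 2 := rpow_four_thirds_mul_sqrt pi_pos.le
  have hMle : M ≤ π ^ 2 := by
    rw [← rpow_two]
    exact rpow_le_rpow_of_exponent_le (by linarith) (by norm_num)
  obtain ⟨ε, hε0, hε1, hμ, hMt⟩ :=
    exists_sqrt_eq_pi_div_two_sub (s := M * t) (by positivity) (by nlinarith [pi_lt_four])
  have hμ0 : 0 < π / 2 - ε := by linarith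
  have hid := integral_deriv_cos_mul_sq_sub (π / 2 - ε) 0 1
  have hhalf := half_le_integral_cos_mul_sq hμ0 (by linarith)
  have hbd := sqrt_div_mul_sin_sq_le hM hMle ht0 hε0 hε1 hMt
  rw [hμ, cos_pi_div_two_sub]
  simp only [mul_zero, mul_one, sin_zero, zero_mul, sin_pi_div_two_sub, cos_pi_div_two_sub] at hid
  have hlam : π ^ 2 / 4 - M * t - -π ^ 5 * t ^ 2 = (π / 2 - ε) ^ 2 + π ^ 5 * t ^ 2 := by
    rw [hMt]; ring
  rw [hlam]
  linarith [mul_le_mul_of_nonneg_left hhalf (by positivity : 0 ≤ π ^ 5 * t ^ 2)]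
end

section
/- Let a > 0 with 2l < a < 2l+1 for some l ∈ ℕ, and let c = (π/2)·tan(πa/2) (so c > 0). Then the equation μ·tan(μa) = (π/2)·tan(πa/2) has exactly one solution μ in the interval (0, π/(2a)) and exactly one solution in each interval ((2j−1)π/(2a), (2j+1)π/(2a)) for j = 1, 2, …. -/
open Real Set Filter Topology

private lemma aux_exu {f : ℝ → ℝ} {p q c : ℝ}
    (hmono : StrictMonoOn f (Ioo p q)) (hcont : ContinuousOn f (Ioo p q))
    (h₁ : ∃ x ∈ Ioo p q, f x < c) (h₂ : ∃ x ∈ Ioo p q, c < f x) :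
    ∃! μ, μ ∈ Ioo p q ∧ f μ = c := by
  obtain ⟨x₁, hx₁, hfx₁⟩ := h₁
  obtain ⟨x₂, hx₂, hfx₂⟩ := h₂
  have hx12 : x₁ < x₂ := by
    by_contra h
    push_neg at h
    rcases eq_or_lt_of_le h with rfl | h'
    · linarith
    · have := hmono hx₂ hx₁ h'; linarith
  have hsub : Icc x₁ x₂ ⊆ Ioo p q := fun y hy =>
    ⟨lt_of_lt_of_le hx₁.1 hy.1, lt_of_le_of_lt hy.2 hx₂.2⟩
  obtain ⟨μ, hμ, hfμ⟩ := intermediate_value_Icc hx12.le (hcont.mono hsub)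
    ⟨hfx₁.le, hfx₂.le⟩
  refine ⟨μ, ⟨hsub hμ, hfμ⟩, ?_⟩
  rintro y ⟨hy, hfy⟩
  exact hmono.injOn hy (hsub hμ) (hfy.trans hfμ.symm)

private lemma aux_deriv {a : ℝ} (μ : ℝ) (hc : Real.cos (μ * a) ≠ 0) :
    HasDerivAt (fun x : ℝ => x * Real.tan (x * a))
      (1 * Real.tan (μ * a) + μ * (1 / Real.cos (μ * a) ^ 2 * a)) μ := by
  have h1 : HasDerivAt (fun x : ℝ => x * a) a μ := by
    simpa using (hasDerivAt_id μ).mul_const a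
  have h2 : HasDerivAt (fun x : ℝ => Real.tan (x * a))
      (1 / Real.cos (μ * a) ^ 2 * a) μ := by
    have := (Real.hasDerivAt_tan hc).comp μ h1; exact this
  exact (hasDerivAt_id μ).mul h2

private lemma aux_mono {a p q : ℝ}
    (hcos : ∀ μ ∈ Ioo p q, Real.cos (μ * a) ≠ 0)
    (hpos : ∀ μ ∈ Ioo p q, 0 < Real.sin (μ*a) * Real.cos (μ*a) + μ * a) :
    StrictMonoOn (fun μ : ℝ => μ * Real.tan (μ * a)) (Ioo p q) := by
  apply strictMonoOn_of_deriv_pos (convex_Ioo p q)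
  · intro μ hμ
    exact (aux_deriv μ (hcos μ hμ)).continuousAt.continuousWithinAt
  · intro μ hμ
    rw [interior_Ioo] at hμ
    rw [(aux_deriv μ (hcos μ hμ)).deriv]
    have hc := hcos μ hμ
    have hc2 : 0 < Real.cos (μ*a)^2 := pow_two_pos_of_ne_zero hc
    have hkey := hpos μ hμ
    have heq : 1 * Real.tan (μ*a) + μ * (1 / Real.cos (μ*a) ^ 2 * a)
        = (Real.sin (μ*a) * Real.cos (μ*a) + μ * a) / Real.cos (μ*a)^2 := by
      rw [Real.tan_eq_sin_div_cos]
      field_simp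
    rw [heq]
    exact div_pos hkey hc2

private lemma aux_cont {a p q : ℝ}
    (hcos : ∀ μ ∈ Ioo p q, Real.cos (μ * a) ≠ 0) :
    ContinuousOn (fun μ : ℝ => μ * Real.tan (μ * a)) (Ioo p q) := fun μ hμ =>
  (aux_deriv μ (hcos μ hμ)).continuousAt.continuousWithinAt

private lemma tan_shift (j : ℕ) (x : ℝ) : Real.tan (x + j * π) = Real.tan x :=
  (Real.tan_periodic.nat_mul j) x

private lemma tan_tendsto_top (j : ℕ) :
    Tendsto Real.tan (𝓝[<] ((2*(j:ℝ)+1)*π/2)) atTop := by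
  have hmap : Tendsto (fun x : ℝ => x - j * π) (𝓝[<] ((2*(j:ℝ)+1)*π/2)) (𝓝[<] (π/2)) := by
    apply tendsto_nhdsWithin_of_tendsto_nhds_of_eventually_within
    · have : Tendsto (fun x : ℝ => x - j * π) (𝓝 ((2*(j:ℝ)+1)*π/2)) (𝓝 ((2*(j:ℝ)+1)*π/2 - j*π)) :=
        (continuous_sub_right _).tendsto _
      rw [show (2*(j:ℝ)+1)*π/2 - j*π = π/2 by ring] at this
      exact this.mono_left nhdsWithin_le_nhds
    · filter_upwards [eventually_mem_nhdsWithin] with x hx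
      simp only [mem_Iio] at hx ⊢
      linarith
  have := Real.tendsto_tan_pi_div_two.comp hmap
  refine this.congr fun x => ?_
  show Real.tan (x - j*π) = Real.tan x
  rw [← tan_shift j (x - j*π)]
  ring_nf

private lemma tan_tendsto_bot (j : ℕ) :
    Tendsto Real.tan (𝓝[>] ((2*(j:ℝ)-1)*π/2)) atBot := by
  have hmap : Tendsto (fun x : ℝ => x - j * π) (𝓝[>] ((2*(j:ℝ)-1)*π/2)) (𝓝[>] (-(π/2))) := by
    apply tendsto_nhdsWithin_of_tendsto_nhds_of_eventually_within
    · have : Tendsto (fun x : ℝ => x - j * π) (𝓝 ((2*(j:ℝ)-1)*π/2)) (𝓝 ((2*(j:ℝ)-1)*π/2 - j*π)) :=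
        (continuous_sub_right _).tendsto _
      rw [show (2*(j:ℝ)-1)*π/2 - j*π = -(π/2) by ring] at this
      exact this.mono_left nhdsWithin_le_nhds
    · filter_upwards [eventually_mem_nhdsWithin] with x hx
      simp only [mem_Ioi] at hx ⊢
      linarith
  have := Real.tendsto_tan_neg_pi_div_two.comp hmap
  refine this.congr fun x => ?_
  show Real.tan (x - j*π) = Real.tan x
  rw [← tan_shift j (x - j*π)]
  ring_nf

theorem stmt11 (l : ℕ) (a : ℝ) (ha : 2 * (l:ℝ) < a) (ha' : a < 2 * (l:ℝ) + 1) :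
    (∃! μ : ℝ, μ ∈ Ioo 0 (π / (2 * a)) ∧
        μ * Real.tan (μ * a) = (π / 2) * Real.tan (π * a / 2))
    ∧ ∀ j : ℕ, 1 ≤ j →
        ∃! μ : ℝ, μ ∈ Ioo ((2 * (j:ℝ) - 1) * π / (2 * a))
            ((2 * (j:ℝ) + 1) * π / (2 * a)) ∧
          μ * Real.tan (μ * a) = (π / 2) * Real.tan (π * a / 2) := by
  have hπ := Real.pi_pos
  have ha0 : 0 < a := lt_of_le_of_lt (by positivity) ha
  set c : ℝ := (π / 2) * Real.tan (π * a / 2) with hc_def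
  -- c > 0
  have hc : 0 < c := by
    have h1 : (l:ℝ) * π < π * a / 2 := by nlinarith
    have h2 : π * a / 2 < (l:ℝ) * π + π / 2 := by nlinarith
    have : Real.tan (π * a / 2) = Real.tan (π * a / 2 - l * π) := by
      rw [← tan_shift l (π * a / 2 - l * π)]; ring_nf
    rw [hc_def, this]
    have ht : 0 < Real.tan (π * a / 2 - l * π) :=
      Real.tan_pos_of_pos_of_lt_pi_div_two (by linarith) (by linarith)
    positivity
  set f : ℝ → ℝ := fun μ => μ * Real.tan (μ * a) with hf_def
  -- tendsto at top near right endpoint of interval j (j : ℕ), endpoint (2j+1)π/(2a)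
  have hTop : ∀ j : ℕ, Tendsto f (𝓝[<] ((2*(j:ℝ)+1)*π/(2*a))) atTop := by
    intro j
    have hq : (0:ℝ) < (2*(j:ℝ)+1)*π/(2*a) := by positivity
    have hmap : Tendsto (fun μ : ℝ => μ * a) (𝓝[<] ((2*(j:ℝ)+1)*π/(2*a)))
        (𝓝[<] ((2*(j:ℝ)+1)*π/2)) := by
      apply tendsto_nhdsWithin_of_tendsto_nhds_of_eventually_within
      · have : Tendsto (fun μ : ℝ => μ * a) (𝓝 ((2*(j:ℝ)+1)*π/(2*a)))
            (𝓝 ((2*(j:ℝ)+1)*π/(2*a) * a)) := (continuous_mul_right a).tendsto _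
        rw [show (2*(j:ℝ)+1)*π/(2*a) * a = (2*(j:ℝ)+1)*π/2 by field_simp] at this
        exact this.mono_left nhdsWithin_le_nhds
      · filter_upwards [eventually_mem_nhdsWithin] with x hx
        simp only [mem_Iio] at hx ⊢
        calc x * a < (2*(j:ℝ)+1)*π/(2*a) * a := by
              exact mul_lt_mul_of_pos_right hx ha0
          _ = (2*(j:ℝ)+1)*π/2 := by field_simp
    have htan := (tan_tendsto_top j).comp hmap
    have hid : Tendsto (fun μ : ℝ => μ) (𝓝[<] ((2*(j:ℝ)+1)*π/(2*a)))
        (𝓝 ((2*(j:ℝ)+1)*π/(2*a))) := tendsto_id.mono_left nhdsWithin_le_nhds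
    exact Tendsto.pos_mul_atTop hq hid htan
  -- tendsto at bot near left endpoint, for j with 1 ≤ j
  have hBot : ∀ j : ℕ, 1 ≤ j → Tendsto f (𝓝[>] ((2*(j:ℝ)-1)*π/(2*a))) atBot := by
    intro j hj
    have hj1 : (1:ℝ) ≤ (j:ℝ) := by exact_mod_cast hj
    have hp : (0:ℝ) < (2*(j:ℝ)-1)*π/(2*a) := by
      have h1 : (0:ℝ) < 2*(j:ℝ)-1 := by linarith
      positivity
    have hmap : Tendsto (fun μ : ℝ => μ * a) (𝓝[>] ((2*(j:ℝ)-1)*π/(2*a)))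
        (𝓝[>] ((2*(j:ℝ)-1)*π/2)) := by
      apply tendsto_nhdsWithin_of_tendsto_nhds_of_eventually_within
      · have : Tendsto (fun μ : ℝ => μ * a) (𝓝 ((2*(j:ℝ)-1)*π/(2*a)))
            (𝓝 ((2*(j:ℝ)-1)*π/(2*a) * a)) := (continuous_mul_right a).tendsto _
        rw [show (2*(j:ℝ)-1)*π/(2*a) * a = (2*(j:ℝ)-1)*π/2 by field_simp] at this
        exact this.mono_left nhdsWithin_le_nhds
      · filter_upwards [eventually_mem_nhdsWithin] with x hx
        simp only [mem_Ioi] at hx ⊢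
        calc (2*(j:ℝ)-1)*π/2 = (2*(j:ℝ)-1)*π/(2*a) * a := by field_simp
          _ < x * a := mul_lt_mul_of_pos_right hx ha0
    have htan := (tan_tendsto_bot j).comp hmap
    have hid : Tendsto (fun μ : ℝ => μ) (𝓝[>] ((2*(j:ℝ)-1)*π/(2*a)))
        (𝓝 ((2*(j:ℝ)-1)*π/(2*a))) := tendsto_id.mono_left nhdsWithin_le_nhds
    exact Tendsto.pos_mul_atBot hp hid htan
  constructor
  · -- first interval
    have hq0 : (0:ℝ) < π/(2*a) := by positivity
    have hqa : π/(2*a) * a = π/2 := by field_simp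
    have hbound : ∀ μ ∈ Ioo (0:ℝ) (π/(2*a)), 0 < μ * a ∧ μ * a < π/2 := by
      rintro μ ⟨h1, h2⟩
      refine ⟨by positivity, ?_⟩
      calc μ * a < π/(2*a) * a := mul_lt_mul_of_pos_right h2 ha0
        _ = π/2 := hqa
    have hcos0 : ∀ μ ∈ Ioo (0:ℝ) (π/(2*a)), Real.cos (μ * a) ≠ 0 := by
      intro μ hμ
      obtain ⟨h1, h2⟩ := hbound μ hμ
      exact ne_of_gt (Real.cos_pos_of_mem_Ioo ⟨by linarith, h2⟩)
    have hpos0 : ∀ μ ∈ Ioo (0:ℝ) (π/(2*a)), 0 < Real.sin (μ*a) * Real.cos (μ*a) + μ * a := by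
      intro μ hμ
      obtain ⟨h1, h2⟩ := hbound μ hμ
      have hs : 0 < Real.sin (μ*a) := Real.sin_pos_of_pos_of_lt_pi h1 (by linarith)
      have hco : 0 < Real.cos (μ*a) := Real.cos_pos_of_mem_Ioo ⟨by linarith, h2⟩
      nlinarith
    -- low witness near 0
    have hca : ContinuousAt f 0 := by
      have hcz : Real.cos ((0:ℝ) * a) ≠ 0 := by norm_num
      exact (aux_deriv 0 hcz).continuousAt
    have hf0 : f 0 = 0 := by simp [hf_def]
    have hlow : ∃ x ∈ Ioo (0:ℝ) (π/(2*a)), f x < c := by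
      have h1 : ∀ᶠ x in 𝓝[>] (0:ℝ), f x < c := by
        have : f ⁻¹' Iio c ∈ 𝓝 (0:ℝ) := hca (Iio_mem_nhds (by rw [hf0]; exact hc))
        exact mem_nhdsWithin_of_mem_nhds this
      have h2 : ∀ᶠ x in 𝓝[>] (0:ℝ), x ∈ Ioo (0:ℝ) (π/(2*a)) :=
        Ioo_mem_nhdsGT_of_mem ⟨le_refl 0, hq0⟩
      obtain ⟨x, hx2, hx1⟩ := (h2.and h1).exists
      exact ⟨x, hx2, hx1⟩
    have hhigh : ∃ x ∈ Ioo (0:ℝ) (π/(2*a)), c < f x := by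
      have hT : Tendsto f (𝓝[<] (π/(2*a))) atTop := by
        have := hTop 0
        norm_num at this
        exact this
      have h1 : ∀ᶠ x in 𝓝[<] (π/(2*a)), c < f x := hT.eventually_gt_atTop c
      have h2 : ∀ᶠ x in 𝓝[<] (π/(2*a)), x ∈ Ioo (0:ℝ) (π/(2*a)) :=
        Ioo_mem_nhdsLT_of_mem ⟨hq0, le_refl _⟩
      obtain ⟨x, hx2, hx1⟩ := (h2.and h1).exists
      exact ⟨x, hx2, hx1⟩
    exact aux_exu (aux_mono hcos0 hpos0) (aux_cont hcos0) hlow hhigh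
  · intro j hj
    have hj1 : (1:ℝ) ≤ (j:ℝ) := by exact_mod_cast hj
    set p : ℝ := (2*(j:ℝ)-1)*π/(2*a) with hp_def
    set q : ℝ := (2*(j:ℝ)+1)*π/(2*a) with hq_def
    have hp0 : 0 < p := by
      have h1 : (0:ℝ) < 2*(j:ℝ)-1 := by linarith
      rw [hp_def]; positivity
    have hpq : p < q := by
      rw [hp_def, hq_def, div_lt_div_iff₀ (by positivity) (by positivity)]
      nlinarith
    have hpa : p * a = (2*(j:ℝ)-1)*π/2 := by rw [hp_def]; field_simp
    have hqa : q * a = (2*(j:ℝ)+1)*π/2 := by rw [hq_def]; field_simp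
    have hbound : ∀ μ ∈ Ioo p q, (2*(j:ℝ)-1)*π/2 < μ * a ∧ μ * a < (2*(j:ℝ)+1)*π/2 := by
      rintro μ ⟨h1, h2⟩
      constructor
      · rw [← hpa]; exact mul_lt_mul_of_pos_right h1 ha0
      · rw [← hqa]; exact mul_lt_mul_of_pos_right h2 ha0
    have hcos_j : ∀ μ ∈ Ioo p q, Real.cos (μ * a) ≠ 0 := by
      intro μ hμ heq
      obtain ⟨h1, h2⟩ := hbound μ hμ
      rw [Real.cos_eq_zero_iff] at heq
      obtain ⟨k, hk⟩ := heq
      rw [hk] at h1 h2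
      have hk1 : (2*(j:ℤ)-1) < 2*k+1 := by
        have : (2*(j:ℝ)-1) < 2*(k:ℝ)+1 := by nlinarith
        exact_mod_cast this
      have hk2 : (2*k+1 : ℤ) < 2*(j:ℤ)+1 := by
        have : (2*(k:ℝ)+1) < 2*(j:ℝ)+1 := by nlinarith
        exact_mod_cast this
      omega
    have hpos_j : ∀ μ ∈ Ioo p q, 0 < Real.sin (μ*a) * Real.cos (μ*a) + μ * a := by
      intro μ hμ
      obtain ⟨h1, h2⟩ := hbound μ hμ
      nlinarith [Real.neg_one_le_sin (2*(μ*a)), Real.sin_two_mul (μ*a), Real.pi_gt_three]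
    have hlow : ∃ x ∈ Ioo p q, f x < c := by
      have h1 : ∀ᶠ x in 𝓝[>] p, f x < c := (hBot j hj).eventually_lt_atBot c
      have h2 : ∀ᶠ x in 𝓝[>] p, x ∈ Ioo p q := Ioo_mem_nhdsGT_of_mem ⟨le_refl _, hpq⟩
      obtain ⟨x, hx2, hx1⟩ := (h2.and h1).exists
      exact ⟨x, hx2, hx1⟩
    have hhigh : ∃ x ∈ Ioo p q, c < f x := by
      have h1 : ∀ᶠ x in 𝓝[<] q, c < f x := (hTop j).eventually_gt_atTop c
      have h2 : ∀ᶠ x in 𝓝[<] q, x ∈ Ioo p q := Ioo_mem_nhdsLT_of_mem ⟨hpq, le_refl _⟩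
      obtain ⟨x, hx2, hx1⟩ := (h2.and h1).exists
      exact ⟨x, hx2, hx1⟩
    exact aux_exu (aux_mono hcos_j hpos_j) (aux_cont hcos_j) hlow hhigh
end

section
/- Let 2l < a < 2l+1 with l ∈ ℕ. Then μ = π/2 is a solution of μ·tan(μa) = (π/2)·tan(πa/2), and it is the (l+1)-st smallest positive solution of this equation; equivalently, exactly l positive solutions are strictly smaller than π/2. -/
open Real Set Filter Topology

/-!
Substituting `x = μ a`, the claim says that `x tan x = b tan b`, with `b = π a / 2` in
`(l π, l π + π / 2)`, has exactly `l` solutions in `(0, b)`. On each branch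
`(k π - π / 2, k π + π / 2) ∩ [0, ∞)` of `tan`, the function `x tan x` is strictly increasing
(its derivative is `(sin x cos x + x) / cos² x`) and continuous, running from `0` (for `k = 0`) or
`-∞` (for `k ≥ 1`) up to `+∞`. Hence every branch contains exactly one solution of
`x tan x = c` for each `c > 0`: the branches `k < l` lie below `b`, and on branch `l` the
solution is `b` itself.
-/

def tanBranch (k : ℤ) : Set ℝ := Ioo (k * π - π / 2) (k * π + π / 2)

lemma cos_ne_zero_of_mem_tanBranch {k : ℤ} {x : ℝ} (hx : x ∈ tanBranch k) : cos x ≠ 0 := by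
  have hpos : 0 < cos (x - k * π) :=
    cos_pos_of_mem_Ioo ⟨by linarith [hx.1], by linarith [hx.2]⟩
  rw [cos_sub_int_mul_pi] at hpos
  exact right_ne_zero_of_mul hpos.ne'

lemma tendsto_tan_nhdsLT_tanBranch (k : ℤ) : Tendsto tan (𝓝[<] (k * π + π / 2)) atTop := by
  have hshift : Tendsto (fun x => x - k * π) (𝓝[<] (k * π + π / 2)) (𝓝[<] (π / 2)) := by
    refine tendsto_nhdsWithin_iff.2 ⟨?_, ?_⟩
    · simpa using ((continuous_sub_right (k * π)).tendsto (k * π + π / 2)).mono_left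
        nhdsWithin_le_nhds
    · filter_upwards [self_mem_nhdsWithin] with x (hx : x < k * π + π / 2)
      exact sub_lt_iff_lt_add'.2 hx
  exact (tendsto_tan_pi_div_two.comp hshift).congr fun x => tan_sub_int_mul_pi x k

lemma tendsto_tan_nhdsGT_tanBranch (k : ℤ) : Tendsto tan (𝓝[>] (k * π - π / 2)) atBot := by
  have hshift : Tendsto (fun x => x - k * π) (𝓝[>] (k * π - π / 2)) (𝓝[>] (-(π / 2))) := by
    refine tendsto_nhdsWithin_iff.2 ⟨?_, ?_⟩
    · simpa using ((continuous_sub_right (k * π)).tendsto (k * π - π / 2)).mono_left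
        nhdsWithin_le_nhds
    · filter_upwards [self_mem_nhdsWithin] with x (hx : k * π - π / 2 < x)
      show -(π / 2) < x - k * π
      linarith
  exact (tendsto_tan_neg_pi_div_two.comp hshift).congr fun x => tan_sub_int_mul_pi x k

lemma continuousOn_mul_tan_tanBranch (k : ℤ) : ContinuousOn (fun x => x * tan x) (tanBranch k) :=
  fun _ hx => (continuousAt_id.mul
    (continuousAt_tan.2 (cos_ne_zero_of_mem_tanBranch hx))).continuousWithinAt

lemma hasDerivAt_mul_tan {x : ℝ} (hx : cos x ≠ 0) :
    HasDerivAt (fun x => x * tan x) ((sin x * cos x + x) / cos x ^ 2) x := by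
  refine ((hasDerivAt_id' x).mul (hasDerivAt_tan hx)).congr_deriv ?_
  rw [tan_eq_sin_div_cos]
  field_simp

lemma sin_mul_cos_add_pos {x : ℝ} (hx : 0 < x) : 0 < sin x * cos x + x := by
  have hsin : |sin x| < x := by simpa [abs_of_pos hx] using abs_sin_lt_abs hx.ne'
  have : |sin x * cos x| ≤ |sin x| := by
    rw [abs_mul]; exact mul_le_of_le_one_right (abs_nonneg _) (abs_cos_le_one x)
  linarith [neg_abs_le (sin x * cos x)]

lemma strictMonoOn_mul_tan_tanBranch (k : ℤ) :
    StrictMonoOn (fun x => x * tan x) (tanBranch k ∩ Ici 0) := by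
  apply strictMonoOn_of_deriv_pos ((convex_Ioo _ _).inter (convex_Ici 0))
    ((continuousOn_mul_tan_tanBranch k).mono inter_subset_left)
  intro x hx
  rw [interior_inter, interior_Ici, interior_Ioo] at hx
  have hcos := cos_ne_zero_of_mem_tanBranch (k := k) hx.1
  rw [(hasDerivAt_mul_tan hcos).deriv]
  exact div_pos (sin_mul_cos_add_pos hx.2) (sq_pos_of_ne_zero hcos)

lemma tendsto_mul_tan_nhdsLT_tanBranch {k : ℤ} (hk : 0 ≤ k) :
    Tendsto (fun x => x * tan x) (𝓝[<] (k * π + π / 2)) atTop :=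
  Tendsto.pos_mul_atTop (by positivity) (tendsto_id.mono_left nhdsWithin_le_nhds)
    (tendsto_tan_nhdsLT_tanBranch k)

lemma int_mul_pi_sub_pi_div_two_pos {k : ℤ} (hk : 0 < k) : 0 < k * π - π / 2 := by
  have hk1 : (1 : ℝ) ≤ k := by exact_mod_cast hk
  nlinarith [pi_pos]

lemma Ioo_zero_pi_div_two_subset_tanBranch_zero : Ioo 0 (π / 2) ⊆ tanBranch 0 := fun x hx => by
  simp only [tanBranch, Int.cast_zero, zero_mul, zero_sub, zero_add]
  exact ⟨by linarith [hx.1, pi_pos], hx.2⟩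

lemma surjOn_mul_tan_tanBranch {k : ℤ} (hk : 0 < k) :
    SurjOn (fun x => x * tan x) (tanBranch k) univ := by
  have hπ := pi_pos
  exact isPreconnected_Ioo.intermediate_value_Iii
    (le_principal_iff.2 (Ioo_mem_nhdsGT (by linarith)))
    (le_principal_iff.2 (Ioo_mem_nhdsLT (by linarith)))
    (continuousOn_mul_tan_tanBranch k)
    (Tendsto.pos_mul_atBot (int_mul_pi_sub_pi_div_two_pos hk)
      (tendsto_id.mono_left nhdsWithin_le_nhds) (tendsto_tan_nhdsGT_tanBranch k))
    (tendsto_mul_tan_nhdsLT_tanBranch hk.le)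

lemma surjOn_mul_tan_Ioo_zero_pi_div_two :
    SurjOn (fun x => x * tan x) (Ioo 0 (π / 2)) (Ioi 0) := by
  have hπ := pi_pos
  have hzero : Tendsto (fun x => x * tan x) (𝓝[>] 0) (𝓝 0) := by
    have h0 : (0 : ℝ) ∈ tanBranch 0 := by simp [tanBranch, hπ]
    simpa using ((continuousOn_mul_tan_tanBranch 0).continuousAt
      (isOpen_Ioo.mem_nhds h0)).tendsto.mono_left nhdsWithin_le_nhds
  exact isPreconnected_Ioo.intermediate_value_Ioi
    (le_principal_iff.2 (Ioo_mem_nhdsGT (by positivity)))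
    (le_principal_iff.2 (Ioo_mem_nhdsLT (by positivity)))
    ((continuousOn_mul_tan_tanBranch 0).mono Ioo_zero_pi_div_two_subset_tanBranch_zero) hzero
    (by simpa using tendsto_mul_tan_nhdsLT_tanBranch le_rfl)

lemma exists_mem_tanBranch_mul_tan_eq (k : ℕ) {c : ℝ} (hc : 0 < c) :
    ∃ x ∈ tanBranch k, 0 < x ∧ x * tan x = c := by
  rcases Nat.eq_zero_or_pos k with rfl | hk
  · obtain ⟨x, hx, hxc⟩ := surjOn_mul_tan_Ioo_zero_pi_div_two (mem_Ioi.2 hc)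
    exact ⟨x, by exact_mod_cast Ioo_zero_pi_div_two_subset_tanBranch_zero hx, hx.1, hxc⟩
  · obtain ⟨x, hx, hxc⟩ := surjOn_mul_tan_tanBranch (Int.natCast_pos.2 hk) (mem_univ c)
    exact ⟨x, hx, (int_mul_pi_sub_pi_div_two_pos (Int.natCast_pos.2 hk)).trans hx.1, hxc⟩

lemma natFloor_eq_of_mem_tanBranch {k : ℕ} {x : ℝ} (hx : x ∈ tanBranch k) :
    ⌊x / π + 1 / 2⌋₊ = k := by
  have hπ := pi_pos
  obtain ⟨h₁, h₂⟩ := hx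
  push_cast at h₁ h₂
  have h₁' : k - 1 / 2 < x / π := by rw [lt_div_iff₀ hπ]; linarith
  have h₂' : x / π < k + 1 / 2 := by rw [div_lt_iff₀ hπ]; linarith
  rw [Nat.floor_eq_iff (by linarith [(Nat.cast_nonneg k : (0 : ℝ) ≤ k)])]
  constructor <;> linarith

lemma mem_tanBranch_natFloor {x : ℝ} (hx : 0 < x) (hcos : cos x ≠ 0) :
    x ∈ tanBranch ⌊x / π + 1 / 2⌋₊ := by
  have hπ := pi_pos
  set n := ⌊x / π + 1 / 2⌋₊
  have h₁ : (n : ℝ) ≤ x / π + 1 / 2 := Nat.floor_le (by positivity)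
  have h₂ : x / π + 1 / 2 < n + 1 := Nat.lt_floor_add_one _
  rw [← sub_le_iff_le_add, le_div_iff₀ hπ] at h₁
  rw [← lt_sub_iff_add_lt, div_lt_iff₀ hπ] at h₂
  have hne : n * π - π / 2 ≠ x := by
    intro h
    exact hcos (by rw [← h, cos_sub_pi_div_two, sin_nat_mul_pi])
  simp only [tanBranch, Int.cast_natCast]
  constructor
  · exact lt_of_le_of_ne (by linarith) hne
  · linarith

theorem ncard_mul_tan_eq_mul_tan_lt {l : ℕ} {b : ℝ} (hb : b ∈ Ioo (l * π) (l * π + π / 2)) :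
    {x | 0 < x ∧ x < b ∧ x * tan x = b * tan b}.ncard = l := by
  have hπ := pi_pos
  have hb0 : 0 < b := by nlinarith [hb.1]
  have hbl : b ∈ tanBranch l := by
    simp only [tanBranch, Int.cast_natCast]
    exact ⟨by linarith [hb.1], hb.2⟩
  have hc : 0 < b * tan b := by
    refine mul_pos hb0 ?_
    rw [← tan_sub_nat_mul_pi]
    exact tan_pos_of_pos_of_lt_pi_div_two (by linarith [hb.1]) (by linarith [hb.2])
  -- `tan` is `0` at the zeros of `cos`, so no solution sits on a pole.
  have hcos : ∀ x, x * tan x = b * tan b → cos x ≠ 0 := fun x hx h => by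
    rw [tan_eq_sin_div_cos, h, div_zero, mul_zero] at hx
    linarith
  have hinj : ∀ k : ℕ, ∀ x ∈ tanBranch k, ∀ y ∈ tanBranch k, 0 < x → 0 < y →
      x * tan x = y * tan y → x = y := fun k x hx y hy hx0 hy0 =>
    (strictMonoOn_mul_tan_tanBranch k).injOn ⟨hx, hx0.le⟩ ⟨hy, hy0.le⟩
  rw [← ncard_Iio_nat l]
  refine ncard_congr (fun x _ => ⌊x / π + 1 / 2⌋₊) ?_ ?_ ?_
  · rintro x ⟨hx0, hxb, hx⟩
    have hxk := mem_tanBranch_natFloor hx0 (hcos x hx)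
    show ⌊x / π + 1 / 2⌋₊ < l
    refine lt_of_le_of_ne ?_ fun hk => hxb.ne (hinj l x (by rwa [hk] at hxk) b hbl hx0 hb0 hx)
    have hleft := hxk.1
    push_cast at hleft
    have hlt : (⌊x / π + 1 / 2⌋₊ : ℝ) < l + 1 := by nlinarith [hb.2]
    exact Nat.lt_succ_iff.1 (by exact_mod_cast hlt)
  · rintro x y ⟨hx0, -, hx⟩ ⟨hy0, -, hy⟩ hxy
    exact hinj _ x (mem_tanBranch_natFloor hx0 (hcos x hx)) y
      (hxy ▸ mem_tanBranch_natFloor hy0 (hcos y hy)) hx0 hy0 (hx.trans hy.symm)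
  · intro k (hk : k < l)
    obtain ⟨x, hxk, hx0, hx⟩ := exists_mem_tanBranch_mul_tan_eq k hc
    refine ⟨x, ⟨hx0, ?_, hx⟩, natFloor_eq_of_mem_tanBranch hxk⟩
    have hright := hxk.2
    push_cast at hright
    have hkl : (k : ℝ) + 1 ≤ l := by exact_mod_cast hk
    nlinarith [hb.1]

theorem stmt12 (l : ℕ) (a : ℝ) (ha : 2 * (l:ℝ) < a) (ha' : a < 2 * (l:ℝ) + 1) :
    (π / 2) * Real.tan ((π / 2) * a) = (π / 2) * Real.tan (π * a / 2)
    ∧ {μ : ℝ | 0 < μ ∧ μ < π / 2 ∧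
        μ * Real.tan (μ * a) = (π / 2) * Real.tan (π * a / 2)}.ncard = l := by
  have hπ := pi_pos
  have ha0 : 0 < a := by linarith [(Nat.cast_nonneg l : (0 : ℝ) ≤ l)]
  have hb : π / 2 * a = π * a / 2 := by ring
  refine ⟨by rw [hb], ?_⟩
  have hscale : {μ : ℝ | 0 < μ ∧ μ < π / 2 ∧ μ * tan (μ * a) = π / 2 * tan (π * a / 2)} =
      (· * a) ⁻¹' {x | 0 < x ∧ x < π / 2 * a ∧ x * tan x = π / 2 * a * tan (π / 2 * a)} := by
    ext μ
    rw [mem_preimage, mem_ofPred, mem_ofPred, ← hb, mul_pos_iff_of_pos_right ha0,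
      mul_lt_mul_iff_of_pos_right ha0, mul_right_comm μ a, mul_right_comm (π / 2) a,
      mul_left_inj' ha0.ne']
  rw [hscale, ncard_preimage_of_injective_subset_range (mul_left_injective₀ ha0.ne')
    fun x _ => ⟨x / a, div_mul_cancel₀ x ha0.ne'⟩]
  exact ncard_mul_tan_eq_mul_tan_lt ⟨by nlinarith, by nlinarith⟩
end
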